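/- arXiv:2601.05959 — 5 statements merged into one kernel-verified Lean document; each statement's English description precedes it below -/
import Mathlib

section
/- Let N ≥ 3, 2* = 2N/(N−2), and γ > 1. Suppose G : ℝ → ℝ satisfies the self-similarity relation G(s) = γ^{−Nj} G(γ^{((N−2)/2) j} s) for all j ∈ ℤ and s ∈ ℝ, and G is continuous. Then there exists a constant C > 0 such that |G(s)| ≤ C |s|^{2*} for all s ∈ ℝ. -/
open Real

/-! With `r = γ ^ ((N - 2) / 2)` and `p = 2*`, self-similarity reads `G s = (rʲ)^(-p) G (rʲ s)`,
since `((N - 2) / 2) * 2* = N`. Every `s ≠ 0` is `r⁻ⁿ u` with `|u|` in the fundamental annulus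
`[1, r)`, on which `|G|` is bounded by compactness; the scaling law turns `G s` into
`(rⁿ)^p G u`, and `rⁿ ≤ |s|`. -/

theorem eq_zero_of_rpow_scaling {G : ℝ → ℝ} {r p : ℝ} (hr : 1 < r) (hp : 0 < p)
    (hss : ∀ (j : ℤ) (s : ℝ), G s = (r ^ j) ^ (-p) * G (r ^ j * s)) : G 0 = 0 := by
  have hfix : G 0 = r ^ (-p) * G 0 := by simpa using hss 1 0
  have hlt : r ^ (-p) < 1 := rpow_lt_one_of_one_lt_of_neg hr (neg_lt_zero.2 hp)
  have hzero : (1 - r ^ (-p)) * G 0 = 0 := by linarith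
  exact (mul_eq_zero.1 hzero).resolve_left (sub_ne_zero.2 hlt.ne')

theorem abs_le_mul_rpow_of_rpow_scaling {G : ℝ → ℝ} (hG : Continuous G) {r p : ℝ}
    (hr : 1 < r) (hp : 0 < p)
    (hss : ∀ (j : ℤ) (s : ℝ), G s = (r ^ j) ^ (-p) * G (r ^ j * s)) :
    ∃ C > 0, ∀ s, |G s| ≤ C * |s| ^ p := by
  obtain ⟨M, hM⟩ := (isCompact_Icc (a := -r) (b := r)).exists_bound_of_continuousOn
    hG.continuousOn
  refine ⟨max M 1, by positivity, fun s => ?_⟩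
  rcases eq_or_ne s 0 with rfl | hs
  · simp [eq_zero_of_rpow_scaling hr hp hss, zero_rpow hp.ne']
  obtain ⟨n, hn_le, hlt_succ⟩ := exists_mem_Ico_zpow (abs_pos.2 hs) hr
  have hr0 : 0 < r := zero_lt_one.trans hr
  have hrn : 0 < r ^ n := zpow_pos hr0 n
  have hscale : G s = (r ^ n) ^ p * G (r ^ (-n) * s) := by
    rw [hss (-n) s, zpow_neg, inv_rpow hrn.le, rpow_neg hrn.le, inv_inv]
  have hu : |r ^ (-n) * s| ≤ r := by
    rw [abs_mul, abs_of_pos (zpow_pos hr0 _), zpow_neg, inv_mul_le_iff₀ hrn,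
      ← zpow_add_one₀ hr0.ne']
    exact hlt_succ.le
  have hGu : |G (r ^ (-n) * s)| ≤ M := hM _ (abs_le.1 hu)
  calc |G s| = (r ^ n) ^ p * |G (r ^ (-n) * s)| := by
        rw [hscale, abs_mul, abs_of_pos (rpow_pos_of_pos hrn p)]
    _ ≤ |s| ^ p * max M 1 := by
        gcongr
        exact hGu.trans (le_max_left M 1)
    _ = max M 1 * |s| ^ p := mul_comm _ _

theorem stmt_2 (N : ℕ) (hN : 3 ≤ N) (γ : ℝ) (hγ : 1 < γ) (G : ℝ → ℝ)
    (hGc : Continuous G)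
    (hss : ∀ (j : ℤ) (s : ℝ),
      G s = γ ^ (-(N : ℝ) * (j : ℝ)) * G (γ ^ (((N : ℝ) - 2) / 2 * (j : ℝ)) * s)) :
    ∃ C > 0, ∀ s : ℝ, |G s| ≤ C * |s| ^ (2 * (N : ℝ) / ((N : ℝ) - 2)) := by
  have hN2 : (2 : ℝ) < N := by exact_mod_cast hN
  have hγ0 : 0 < γ := zero_lt_one.trans hγ
  have hzpow : ∀ j : ℤ, (γ ^ (((N : ℝ) - 2) / 2)) ^ j = γ ^ (((N : ℝ) - 2) / 2 * j) :=
    fun j => by rw [← rpow_intCast, ← rpow_mul hγ0.le]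
  refine abs_le_mul_rpow_of_rpow_scaling hGc (r := γ ^ (((N : ℝ) - 2) / 2))
    (one_lt_rpow hγ (by linarith)) (div_pos (by linarith) (by linarith)) fun j s => ?_
  rw [hzpow, ← rpow_mul hγ0.le, hss j s]
  congr 2
  field_simp [(by linarith : (N : ℝ) - 2 ≠ 0)]
end

section
/- Let N ≥ 3, 2* = 2N/(N−2), γ > 1 and let G : ℝ → ℝ be a continuous self-similar function, i.e. G(s) = γ^{−Nj} G(γ^{((N−2)/2) j} s) for all j ∈ ℤ, s ∈ ℝ, which is locally Lipschitz. Then there exists C > 0 such that for all a₁, a₂ ∈ ℝ: |G(a₁ + a₂) − G(a₁) − G(a₂)| ≤ C ( |a₁| |a₂|^{2*−1} + |a₁|^{2*−1} |a₂| ). -/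
/-!
With `Λ = γ ^ ((N - 2) / 2)` the self-similarity reads `G (Λ ^ j * s) = (Λ ^ j) ^ 2* * G s`, so `G`
is homogeneous of degree `2*` along the dilations `Λ ^ ℤ`. On the fixed interval `[-Λ, Λ]` the
function `G` is Lipschitz with some constant `K`; rescaling by the `Λ ^ j` with
`Λ ^ j ≤ M < Λ ^ (j + 1)` turns this into the bound `K * M ^ (2* - 1)` for the Lipschitz constant on
`[-M, M]`. For `|b| ≤ |a|`, compare `G (a + b)` with `G a` and `G b` with `G 0 = 0` on
`[-2|a|, 2|a|]`; the other term comes from swapping `a` and `b`.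
-/

open Real Set

def IsSelfSimilar (Λ p : ℝ) (G : ℝ → ℝ) : Prop :=
  ∀ (j : ℤ) (s : ℝ), G (Λ ^ j * s) = (Λ ^ j) ^ p * G s

lemma isSelfSimilar_rpow {γ e n p : ℝ} {G : ℝ → ℝ} (hγ : 0 < γ) (hep : e * p = n)
    (hss : ∀ (j : ℤ) (s : ℝ), G s = γ ^ (-n * j) * G (γ ^ (e * j) * s)) :
    IsSelfSimilar (γ ^ e) p G := by
  intro j s
  have hzpow : (γ ^ e) ^ j = γ ^ (e * j) := by
    rw [← rpow_intCast, ← rpow_mul hγ.le]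
  have hdeg : (γ ^ (e * j)) ^ p = γ ^ (n * j) := by
    rw [← rpow_mul hγ.le, ← hep]; ring_nf
  rw [hzpow, hdeg, hss j s, ← mul_assoc, ← rpow_add hγ, neg_mul, add_neg_cancel, rpow_zero,
    one_mul]

namespace IsSelfSimilar

variable {Λ p : ℝ} {G : ℝ → ℝ}

lemma map_zero (hG : IsSelfSimilar Λ p G) (hΛ : 1 < Λ) (hp : 0 < p) : G 0 = 0 := by
  have h := hG 1 0
  rw [mul_zero, zpow_one] at h
  have : 1 < Λ ^ p := one_lt_rpow hΛ hp
  nlinarith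

lemma map_eq_mul_map_div (hG : IsSelfSimilar Λ p G) (hΛ : 0 < Λ) (j : ℤ) (x : ℝ) :
    G x = (Λ ^ j) ^ p * G (x / Λ ^ j) := by
  rw [← hG, mul_div_cancel₀ _ (zpow_pos hΛ j).ne']

lemma abs_sub_le (hG : IsSelfSimilar Λ p G) (hΛ : 1 < Λ) (hp : 1 ≤ p) {K : NNReal}
    (hK : LipschitzOnWith K G (Icc (-Λ) Λ)) {M x y : ℝ} (hx : |x| ≤ M) (hy : |y| ≤ M) :
    |G x - G y| ≤ K * M ^ (p - 1) * |x - y| := by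
  rcases (abs_nonneg x |>.trans hx).eq_or_lt with rfl | hM
  · simp [abs_nonpos_iff.mp hx, abs_nonpos_iff.mp hy]
  obtain ⟨j, hjM, hMj⟩ := exists_mem_Ico_zpow hM hΛ
  set c := Λ ^ j
  have hc : 0 < c := zpow_pos (by linarith) j
  rw [zpow_add_one₀ (by linarith)] at hMj
  have hmem : ∀ z, |z| ≤ M → z / c ∈ Icc (-Λ) Λ := fun z hz => by
    rw [mem_Icc, ← abs_le, abs_div, abs_of_pos hc, div_le_iff₀ hc]
    linarith
  have hLip : |G (x / c) - G (y / c)| ≤ K * (|x - y| / c) := by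
    simpa only [Real.dist_eq, ← sub_div, abs_div, abs_of_pos hc] using
      hK.dist_le_mul _ (hmem x hx) _ (hmem y hy)
  calc |G x - G y| = c ^ p * |G (x / c) - G (y / c)| := by
        rw [hG.map_eq_mul_map_div (by linarith) j x, hG.map_eq_mul_map_div (by linarith) j y,
          ← mul_sub, abs_mul, abs_of_pos (rpow_pos_of_pos hc p)]
    _ ≤ c ^ p * (K * (|x - y| / c)) := by gcongr
    _ = K * c ^ (p - 1) * |x - y| := by rw [rpow_sub_one hc.ne']; ring
    _ ≤ K * M ^ (p - 1) * |x - y| := by gcongr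

lemma abs_map_add_sub_le (hG : IsSelfSimilar Λ p G) (hΛ : 1 < Λ) (hp : 1 ≤ p) {K : NNReal}
    (hK : LipschitzOnWith K G (Icc (-Λ) Λ)) {a b : ℝ} (hba : |b| ≤ |a|) :
    |G (a + b) - G a - G b| ≤ K * 2 ^ p * (|a| ^ (p - 1) * |b|) := by
  have hM : ∀ z, |z| ≤ |a| → |z| ≤ 2 * |a| := fun z hz => by linarith [abs_nonneg a]
  have h₁ := hG.abs_sub_le hΛ hp hK (x := a + b) (y := a) (M := 2 * |a|)
    ((abs_add_le a b).trans (by linarith)) (hM a le_rfl)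
  have h₂ := hG.abs_sub_le hΛ hp hK (x := b) (y := 0) (M := 2 * |a|) (hM b hba)
    (by simp [abs_nonneg])
  rw [add_sub_cancel_left] at h₁
  rw [hG.map_zero hΛ (by linarith), sub_zero, sub_zero] at h₂
  have h2p : (2 * |a|) ^ (p - 1) * 2 = 2 ^ p * |a| ^ (p - 1) := by
    rw [mul_rpow zero_le_two (abs_nonneg a), rpow_sub_one two_ne_zero]; field_simp
  calc |G (a + b) - G a - G b| ≤ |G (a + b) - G a| + |G b| := abs_sub _ _
    _ ≤ K * (2 * |a|) ^ (p - 1) * |b| * 2 := by linarith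
    _ = K * 2 ^ p * (|a| ^ (p - 1) * |b|) := by rw [mul_right_comm, mul_assoc _ _ 2, h2p]; ring

lemma exists_abs_map_add_sub_le (hG : IsSelfSimilar Λ p G) (hΛ : 1 < Λ) (hp : 1 ≤ p)
    (hlip : LocallyLipschitz G) :
    ∃ C > 0, ∀ a b : ℝ,
      |G (a + b) - G a - G b| ≤ C * (|a| * |b| ^ (p - 1) + |a| ^ (p - 1) * |b|) := by
  obtain ⟨K, hK⟩ := hlip.locallyLipschitzOn.exists_lipschitzOnWith_of_compact isCompact_Icc
  refine ⟨(K : ℝ) * 2 ^ p + 1, by positivity, fun a b => ?_⟩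
  have hS₁ : |a| ^ (p - 1) * |b| ≤ |a| * |b| ^ (p - 1) + |a| ^ (p - 1) * |b| :=
    le_add_of_nonneg_left (by positivity)
  have hS₂ : |a| * |b| ^ (p - 1) ≤ |a| * |b| ^ (p - 1) + |a| ^ (p - 1) * |b| :=
    le_add_of_nonneg_right (by positivity)
  rcases le_total |b| |a| with hba | hab
  · calc |G (a + b) - G a - G b| ≤ K * 2 ^ p * (|a| ^ (p - 1) * |b|) :=
          hG.abs_map_add_sub_le hΛ hp hK hba
      _ ≤ (K * 2 ^ p + 1) * (|a| * |b| ^ (p - 1) + |a| ^ (p - 1) * |b|) := by gcongr; linarith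
  · calc |G (a + b) - G a - G b| = |G (b + a) - G b - G a| := by rw [add_comm, sub_right_comm]
      _ ≤ K * 2 ^ p * (|a| * |b| ^ (p - 1)) := by
          rw [mul_comm |a|]; exact hG.abs_map_add_sub_le hΛ hp hK hab
      _ ≤ (K * 2 ^ p + 1) * (|a| * |b| ^ (p - 1) + |a| ^ (p - 1) * |b|) := by gcongr; linarith

end IsSelfSimilar

theorem stmt_4_general (N : ℕ) (hN : 3 ≤ N) (γ : ℝ) (hγ : 1 < γ) (G : ℝ → ℝ)
    (hlip : LocallyLipschitz G)
    (hss : ∀ (j : ℤ) (s : ℝ),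
      G s = γ ^ (-(N : ℝ) * (j : ℝ)) * G (γ ^ (((N : ℝ) - 2) / 2 * (j : ℝ)) * s)) :
    ∃ C > 0, ∀ a₁ a₂ : ℝ,
      |G (a₁ + a₂) - G a₁ - G a₂| ≤
        C * (|a₁| * |a₂| ^ (2 * (N : ℝ) / ((N : ℝ) - 2) - 1) +
          |a₁| ^ (2 * (N : ℝ) / ((N : ℝ) - 2) - 1) * |a₂|) := by
  have hN' : (2 : ℝ) < N := by exact_mod_cast hN
  have hG : IsSelfSimilar (γ ^ (((N : ℝ) - 2) / 2)) (2 * N / (N - 2)) G :=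
    isSelfSimilar_rpow (by linarith) (by field_simp [sub_ne_zero.2 hN'.ne']) hss
  refine hG.exists_abs_map_add_sub_le (one_lt_rpow hγ (by linarith)) ?_ hlip
  rw [le_div_iff₀ (by linarith)]
  linarith

theorem stmt_4 (N : ℕ) (hN : 3 ≤ N) (γ : ℝ) (hγ : 1 < γ) (G : ℝ → ℝ)
    (hGc : Continuous G) (hlip : LocallyLipschitz G)
    (hss : ∀ (j : ℤ) (s : ℝ),
      G s = γ ^ (-(N : ℝ) * (j : ℝ)) * G (γ ^ (((N : ℝ) - 2) / 2 * (j : ℝ)) * s)) :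
    ∃ C > 0, ∀ a₁ a₂ : ℝ,
      |G (a₁ + a₂) - G a₁ - G a₂| ≤
        C * (|a₁| * |a₂| ^ (2 * (N : ℝ) / ((N : ℝ) - 2) - 1) +
          |a₁| ^ (2 * (N : ℝ) / ((N : ℝ) - 2) - 1) * |a₂|) :=
  stmt_4_general N hN γ hγ G hlip hss
end

section
/- Let N ≥ 3, 2* = 2N/(N−2), and let g : ℝ → ℝ be continuous with |g(s)| ≤ a |s|^{2*−1} for some a > 0, and b ∈ L^∞(ℝ^N). Let G(s) = ∫₀^s g. If (u_k), (v_k) are bounded sequences in L^{2*}(ℝ^N) with u_k − v_k → 0 in L^{2*}(ℝ^N), then ∫_{ℝ^N} b(x)(G(u_k) − G(v_k)) dx → 0 as k → ∞. -/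
/-!
The primitive satisfies `|G s - G t| ≤ a (|s| + |t|)^(p-1) |s - t|`, so Hölder's inequality with
exponents `p` and `p / (p - 1)` gives
`‖b (G ∘ u - G ∘ v)‖₁ ≤ Cb a ‖u - v‖_p (‖u‖_p + ‖v‖_p)^(p-1)`.
The last factor is bounded uniformly in `k`, and `‖∫ f‖ ≤ ‖f‖₁`.
-/

open MeasureTheory Filter ENNReal intervalIntegral

theorem abs_integral_sub_integral_le_of_abs_le_rpow {g : ℝ → ℝ} (hg : Continuous g) {a r : ℝ}
    (hr : 0 ≤ r) (hgrowth : ∀ s, |g s| ≤ a * |s| ^ r) (s t : ℝ) :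
    |(∫ τ in (0 : ℝ)..s, g τ) - ∫ τ in (0 : ℝ)..t, g τ| ≤ a * (|s| + |t|) ^ r * |s - t| := by
  have ha : 0 ≤ a := by simpa using (abs_nonneg _).trans (hgrowth 1)
  rw [integral_interval_sub_left (hg.intervalIntegrable 0 s) (hg.intervalIntegrable 0 t)]
  refine norm_integral_le_of_norm_le_const (f := g) fun x hx => ?_
  have hx : |x| ≤ |s| + |t| :=
    abs_le.2 <| Set.uIcc_subset_Icc (abs_le.1 (le_add_of_nonneg_left (abs_nonneg s)))
      (abs_le.1 (le_add_of_nonneg_right (abs_nonneg t))) (Set.uIoc_subset_uIcc hx)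
  calc ‖g x‖ ≤ a * |x| ^ r := hgrowth x
    _ ≤ a * (|s| + |t|) ^ r := by gcongr

section Lp

variable {α : Type*} [MeasurableSpace α] {μ : Measure α}

theorem eLpNorm_one_mul_norm_rpow_le {f w : α → ℝ} (hf : AEStronglyMeasurable f μ)
    (hw : AEStronglyMeasurable w μ) {p : ℝ} (hp : 1 < p) :
    eLpNorm (fun x => f x * ‖w x‖ ^ (p - 1)) 1 μ ≤
      eLpNorm f (.ofReal p) μ * eLpNorm w (.ofReal p) μ ^ (p - 1) := by
  have : HolderConjugate (.ofReal p) (.ofReal p.conjExponent) :=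
    (Real.HolderConjugate.conjExponent hp).ennrealOfReal
  have hp1 : 0 < p - 1 := sub_pos.2 hp
  have hw' : AEStronglyMeasurable (fun x => ‖w x‖ ^ (p - 1)) μ :=
    (hw.norm.aemeasurable.pow_const _).aestronglyMeasurable
  calc eLpNorm (fun x => f x * ‖w x‖ ^ (p - 1)) 1 μ
      ≤ eLpNorm f (.ofReal p) μ *
          eLpNorm (fun x => ‖w x‖ ^ (p - 1)) (.ofReal p.conjExponent) μ :=
        eLpNorm_smul_le_mul_eLpNorm (p := .ofReal p) (r := 1) (φ := f) hw' hf
    _ = eLpNorm f (.ofReal p) μ * eLpNorm w (.ofReal p) μ ^ (p - 1) := by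
        rw [eLpNorm_norm_rpow _ hp1,
          ← ofReal_mul (Real.HolderConjugate.conjExponent hp).symm.nonneg, Real.conjExponent,
          div_mul_cancel₀ _ hp1.ne']

theorem eLpNorm_one_mul_sub_primitive_comp_le {g G : ℝ → ℝ} (hg : Continuous g) {a p : ℝ}
    (hp : 1 < p) (hgrowth : ∀ s, |g s| ≤ a * |s| ^ (p - 1))
    (hG : ∀ s, G s = ∫ t in (0 : ℝ)..s, g t) {b u v : α → ℝ} {Cb : ℝ} (hCb : ∀ x, |b x| ≤ Cb)
    (hu : AEStronglyMeasurable u μ) (hv : AEStronglyMeasurable v μ) :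
    eLpNorm (fun x => b x * (G (u x) - G (v x))) 1 μ ≤ .ofReal (Cb * a) *
      (eLpNorm (u - v) (.ofReal p) μ *
        (eLpNorm u (.ofReal p) μ + eLpNorm v (.ofReal p) μ) ^ (p - 1)) := by
  set W : α → ℝ := (fun x => ‖u x‖) + fun x => ‖v x‖
  have hpointwise : ∀ x, ‖b x * (G (u x) - G (v x))‖ ≤
      Cb * a * ‖(u - v) x * ‖W x‖ ^ (p - 1)‖ := fun x => by
    have hW_norm : ‖W x‖ = |u x| + |v x| :=
      abs_of_nonneg (add_nonneg (abs_nonneg _) (abs_nonneg _))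
    rw [Real.norm_eq_abs, Real.norm_eq_abs, abs_mul, abs_mul, hW_norm,
      abs_of_nonneg (Real.rpow_nonneg (by positivity) _), hG, hG]
    calc |b x| * |(∫ t in (0 : ℝ)..u x, g t) - ∫ t in (0 : ℝ)..v x, g t|
        ≤ Cb * (a * (|u x| + |v x|) ^ (p - 1) * |u x - v x|) :=
          mul_le_mul (hCb x) (abs_integral_sub_integral_le_of_abs_le_rpow hg (sub_pos.2 hp).le
            hgrowth _ _) (abs_nonneg _) ((abs_nonneg _).trans (hCb x))
      _ = Cb * a * (|(u - v) x| * (|u x| + |v x|) ^ (p - 1)) := by simp only [Pi.sub_apply]; ring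
  have hW_le : eLpNorm W (.ofReal p) μ ≤ eLpNorm u (.ofReal p) μ + eLpNorm v (.ofReal p) μ := by
    simpa only [eLpNorm_norm] using
      eLpNorm_add_le hu.norm hv.norm (by simpa using hp.le)
  calc eLpNorm (fun x => b x * (G (u x) - G (v x))) 1 μ
      ≤ .ofReal (Cb * a) * eLpNorm (fun x => (u - v) x * ‖W x‖ ^ (p - 1)) 1 μ :=
        eLpNorm_le_mul_eLpNorm_of_ae_le_mul (.of_forall hpointwise) 1
    _ ≤ .ofReal (Cb * a) *
          (eLpNorm (u - v) (.ofReal p) μ * eLpNorm W (.ofReal p) μ ^ (p - 1)) := by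
        gcongr
        exact eLpNorm_one_mul_norm_rpow_le (hu.sub hv) (hu.norm.add hv.norm) hp
    _ ≤ _ := by gcongr

theorem tendsto_integral_zero_of_tendsto_eLpNorm_one {E : Type*} [NormedAddCommGroup E]
    [NormedSpace ℝ E] {ι : Type*} {l : Filter ι} {F : ι → α → E}
    (h : Tendsto (fun i => eLpNorm (F i) 1 μ) l (nhds 0)) :
    Tendsto (fun i => ∫ x, F i x ∂μ) l (nhds 0) := by
  refine squeeze_zero_norm (fun i => ?_) ((ENNReal.tendsto_toReal zero_ne_top).comp h)
  simpa [eLpNorm_one_eq_lintegral_enorm, ofReal_norm] using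
    norm_integral_le_lintegral_norm (F i) (μ := μ)

end Lp

theorem stmt_9_general (N : ℕ) (hN : 3 ≤ N) (p : ℝ) (hp : p = 2 * (N : ℝ) / ((N : ℝ) - 2))
    (g : ℝ → ℝ) (hg : Continuous g) (a : ℝ)
    (hgrowth : ∀ s : ℝ, |g s| ≤ a * |s| ^ (p - 1))
    (b : EuclideanSpace ℝ (Fin N) → ℝ)
    (Cb : ℝ) (hCb : ∀ x, |b x| ≤ Cb)
    (G : ℝ → ℝ) (hG : ∀ s : ℝ, G s = ∫ t in (0 : ℝ)..s, g t)
    (u v : ℕ → EuclideanSpace ℝ (Fin N) → ℝ)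
    (hum : ∀ k, AEStronglyMeasurable (u k) volume)
    (hvm : ∀ k, AEStronglyMeasurable (v k) volume)
    (C : ℝ≥0∞) (hC : C < ⊤)
    (hub : ∀ k, eLpNorm (u k) (ENNReal.ofReal p) volume ≤ C)
    (hvb : ∀ k, eLpNorm (v k) (ENNReal.ofReal p) volume ≤ C)
    (hconv : Tendsto (fun k => eLpNorm (u k - v k) (ENNReal.ofReal p) volume)
      atTop (nhds 0)) :
    Tendsto (fun k => ∫ x, b x * (G (u k x) - G (v k x))) atTop (nhds 0) := by
  have hp1 : 1 < p := by
    have hN3 : (3 : ℝ) ≤ N := by exact_mod_cast hN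
    rw [hp, lt_div_iff₀ (by linarith)]
    linarith
  set K : ℝ≥0∞ := .ofReal (Cb * a) * (C + C) ^ (p - 1)
  have hK : K ≠ ⊤ := mul_ne_top ofReal_ne_top
    (rpow_ne_top_of_nonneg (by linarith) (add_ne_top.2 ⟨hC.ne, hC.ne⟩))
  have hbound : ∀ k, eLpNorm (fun x => b x * (G (u k x) - G (v k x))) 1 volume ≤
      K * eLpNorm (u k - v k) (.ofReal p) volume := fun k => calc
    _ ≤ .ofReal (Cb * a) * (eLpNorm (u k - v k) (.ofReal p) volume *
          (eLpNorm (u k) (.ofReal p) volume + eLpNorm (v k) (.ofReal p) volume) ^ (p - 1)) :=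
        eLpNorm_one_mul_sub_primitive_comp_le hg hp1 hgrowth hG hCb (hum k) (hvm k)
    _ ≤ .ofReal (Cb * a) * (eLpNorm (u k - v k) (.ofReal p) volume * (C + C) ^ (p - 1)) := by
        gcongr
        exacts [hub k, hvb k]
    _ = K * eLpNorm (u k - v k) (.ofReal p) volume := by ring
  refine tendsto_integral_zero_of_tendsto_eLpNorm_one <|
    tendsto_of_tendsto_of_tendsto_of_le_of_le tendsto_const_nhds ?_ (fun _ => zero_le) hbound
  simpa using ENNReal.Tendsto.const_mul hconv (Or.inr hK)

theorem stmt_9 (N : ℕ) (hN : 3 ≤ N) (p : ℝ) (hp : p = 2 * (N : ℝ) / ((N : ℝ) - 2))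
    (g : ℝ → ℝ) (hg : Continuous g) (a : ℝ) (ha : 0 < a)
    (hgrowth : ∀ s : ℝ, |g s| ≤ a * |s| ^ (p - 1))
    (b : EuclideanSpace ℝ (Fin N) → ℝ) (hbm : Measurable b)
    (Cb : ℝ) (hCb : ∀ x, |b x| ≤ Cb)
    (G : ℝ → ℝ) (hG : ∀ s : ℝ, G s = ∫ t in (0 : ℝ)..s, g t)
    (u v : ℕ → EuclideanSpace ℝ (Fin N) → ℝ)
    (hum : ∀ k, AEStronglyMeasurable (u k) volume)
    (hvm : ∀ k, AEStronglyMeasurable (v k) volume)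
    (C : ℝ≥0∞) (hC : C < ⊤)
    (hub : ∀ k, eLpNorm (u k) (ENNReal.ofReal p) volume ≤ C)
    (hvb : ∀ k, eLpNorm (v k) (ENNReal.ofReal p) volume ≤ C)
    (hconv : Tendsto (fun k => eLpNorm (u k - v k) (ENNReal.ofReal p) volume)
      atTop (nhds 0)) :
    Tendsto (fun k => ∫ x, b x * (G (u k x) - G (v k x))) atTop (nhds 0) :=
  stmt_9_general N hN p hp g hg a hgrowth b Cb hCb G hG u v hum hvm C hC hub hvb hconv
end

section
/- Let f : ℝ^N × ℝ → ℝ be continuous and satisfy: for every ε > 0 there exist C_ε > 0 and p_ε ∈ (2, 2*) with |f(x,s)| ≤ ε(|s| + |s|^{2*−1}) + C_ε |s|^{p_ε−1} for all (x,s). Let F(x,s) = ∫₀^s f(x,t) dt. If (u_k), (v_k) are sequences bounded in L²(ℝ^N) ∩ L^{2*}(ℝ^N) with u_k − v_k → 0 in L^p(ℝ^N) for some p ∈ (2, 2*), then ∫_{ℝ^N} (F(x, u_k) − F(x, v_k)) dx → 0. -/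
open MeasureTheory Filter ENNReal intervalIntegral Topology

/-!
With `M = |a| + |b|`, the growth condition gives
`|F(x,a) - F(x,b)| ≤ (ε (M + M^(2*-1)) + C_ε M^(p_ε-1)) |a - b|`.
Integrating along `a = u_k(x)`, `b = v_k(x)` and applying Hölder's inequality termwise bounds
`∫ |F(x,u_k) - F(x,v_k)|` by `ε` times a constant depending only on the bounds in `L² ∩ L^(2*)`,
plus `C_ε ‖u_k - v_k‖_(p_ε) ‖|u_k| + |v_k|‖_(p_ε)^(p_ε-1)`. Interpolation between `L²` and
`L^(2*)` keeps the last factor bounded and carries `u_k - v_k → 0` from `L^p` over to `L^(p_ε)`.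
-/

lemma abs_integral_sub_integral_le {g : ℝ → ℝ} (hg : Continuous g) {a b K : ℝ}
    (hK : ∀ t, |t| ≤ |a| + |b| → |g t| ≤ K) :
    |(∫ t in (0 : ℝ)..a, g t) - ∫ t in (0 : ℝ)..b, g t| ≤ K * |a - b| := by
  rw [integral_interval_sub_left (hg.intervalIntegrable 0 a) (hg.intervalIntegrable 0 b),
    ← Real.norm_eq_abs]
  refine norm_integral_le_of_norm_le_const fun t ht => (Real.norm_eq_abs _).trans_le (hK t ?_)
  rcases Set.mem_uIoc.1 ht with ⟨h₁, h₂⟩ | ⟨h₁, h₂⟩ <;>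
    exact abs_le.2 ⟨by linarith [neg_abs_le a, neg_abs_le b, abs_nonneg a, abs_nonneg b],
      by linarith [le_abs_self a, le_abs_self b, abs_nonneg a, abs_nonneg b]⟩

lemma abs_integral_sub_integral_le_of_growth {g : ℝ → ℝ} (hg : Continuous g) {ε C r q : ℝ}
    (hε : 0 ≤ ε) (hC : 0 ≤ C) (hr : 1 ≤ r) (hq : 1 ≤ q)
    (hbd : ∀ s, |g s| ≤ ε * (|s| + |s| ^ (r - 1)) + C * |s| ^ (q - 1)) (a b : ℝ) :
    |(∫ t in (0 : ℝ)..a, g t) - ∫ t in (0 : ℝ)..b, g t| ≤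
      (ε * ((|a| + |b|) + (|a| + |b|) ^ (r - 1)) + C * (|a| + |b|) ^ (q - 1)) * |a - b| :=
  abs_integral_sub_integral_le hg fun t ht => (hbd t).trans (by gcongr)

lemma exists_interpolation_exponent {a b q : ℝ} (ha : 0 < a) (haq : a < q) (hqb : q < b) :
    ∃ θ ∈ Set.Ioo (0 : ℝ) 1, 1 / q = θ / a + (1 - θ) / b := by
  have hq : 0 < q := ha.trans haq
  have hb : 0 < b := hq.trans hqb
  have hgap : 0 < 1 / a - 1 / b := sub_pos.2 (one_div_lt_one_div_of_lt ha (haq.trans hqb))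
  set θ := (1 / q - 1 / b) / (1 / a - 1 / b) with hθ
  have hθgap : θ * (1 / a - 1 / b) = 1 / q - 1 / b := div_mul_cancel₀ _ hgap.ne'
  refine ⟨θ, ⟨?_, ?_⟩, ?_⟩
  · exact div_pos (sub_pos.2 (one_div_lt_one_div_of_lt hq hqb)) hgap
  · rw [hθ, div_lt_one hgap]
    linarith [one_div_lt_one_div_of_lt ha haq]
  · linear_combination -hθgap

lemma tendsto_zero_of_forall_le_ofReal_mul_add {ι : Type*} {l : Filter ι} {x : ι → ℝ≥0∞} {A : ℝ≥0∞}
    (hA : A ≠ ∞)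
    (h : ∀ ε : ℝ, 0 < ε → ∃ c : ι → ℝ≥0∞, Tendsto c l (𝓝 0) ∧
      ∀ k, x k ≤ ENNReal.ofReal ε * A + c k) :
    Tendsto x l (𝓝 0) := by
  rw [ENNReal.tendsto_nhds_zero]
  intro δ hδ
  have hsmall : Tendsto (fun ε : ℝ => ENNReal.ofReal ε * A) (𝓝[>] 0) (𝓝 0) := by
    simpa using ENNReal.Tendsto.mul_const (ENNReal.tendsto_ofReal
      (tendsto_nhdsWithin_of_tendsto_nhds (tendsto_id (x := 𝓝 (0 : ℝ))))) (Or.inr hA)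
  obtain ⟨ε, hεA, hε⟩ :=
    ((hsmall.eventually (gt_mem_nhds (ENNReal.half_pos hδ.ne'))).and self_mem_nhdsWithin).exists
  obtain ⟨c, hc, hxc⟩ := h ε hε
  filter_upwards [ENNReal.tendsto_nhds_zero.1 hc (δ / 2) (ENNReal.half_pos hδ.ne')] with k hk
  calc x k ≤ ENNReal.ofReal ε * A + c k := hxc k
    _ ≤ δ / 2 + δ / 2 := add_le_add hεA.le hk
    _ = δ := ENNReal.add_halves δ

section

variable {α E E' : Type*} [MeasurableSpace α] {μ : Measure α} [NormedAddCommGroup E]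
  [NormedAddCommGroup E']

lemma eLpNorm_ofReal_eq_lintegral {q : ℝ} (hq : 0 < q) (g : α → E) :
    eLpNorm g (ENNReal.ofReal q) μ = (∫⁻ x, ‖g x‖ₑ ^ q ∂μ) ^ (1 / q) := by
  rw [eLpNorm_eq_lintegral_rpow_enorm_toReal (by simpa using hq) ofReal_ne_top,
    toReal_ofReal hq.le]

lemma lintegral_enorm_mul_rpow_le {w : α → E} {M : α → E'} (hw : AEStronglyMeasurable w μ)
    (hM : AEStronglyMeasurable M μ) {q : ℝ} (hq : 1 < q) :
    ∫⁻ x, ‖w x‖ₑ * ‖M x‖ₑ ^ (q - 1) ∂μ ≤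
      eLpNorm w (ENNReal.ofReal q) μ * eLpNorm M (ENNReal.ofReal q) μ ^ (q - 1) := by
  have hq₀ : 0 < q := one_pos.trans hq
  have hsplit : ∀ x, ‖w x‖ₑ * ‖M x‖ₑ ^ (q - 1) =
      (‖w x‖ₑ ^ q) ^ (1 / q) * (‖M x‖ₑ ^ q) ^ ((q - 1) / q) := by
    intro x
    rw [← rpow_mul, ← rpow_mul, mul_one_div_cancel hq₀.ne', rpow_one, mul_div_cancel₀ _ hq₀.ne']
  simp_rw [hsplit]
  refine (lintegral_mul_norm_pow_le (hw.enorm.pow_const q) (hM.enorm.pow_const q)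
    (by positivity) (div_nonneg (by linarith) hq₀.le) (by field_simp; ring)).trans_eq ?_
  rw [eLpNorm_ofReal_eq_lintegral hq₀, eLpNorm_ofReal_eq_lintegral hq₀, ← rpow_mul,
    one_div_mul_eq_div]

theorem eLpNorm_le_eLpNorm_rpow_mul_eLpNorm_rpow {g : α → E} (hg : AEStronglyMeasurable g μ)
    {a b q θ : ℝ} (ha : 0 < a) (hb : 0 < b) (hθ₀ : 0 ≤ θ) (hθ₁ : θ ≤ 1)
    (hq : 1 / q = θ / a + (1 - θ) / b) :
    eLpNorm g (ENNReal.ofReal q) μ ≤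
      eLpNorm g (ENNReal.ofReal a) μ ^ θ * eLpNorm g (ENNReal.ofReal b) μ ^ (1 - θ) := by
  have hq₀ : 0 < q := by
    rw [← one_div_pos, hq]
    rcases hθ₀.lt_or_eq with hθ | rfl
    · have : 0 ≤ (1 - θ) / b := div_nonneg (by linarith) hb.le
      positivity
    · simpa using hb
  have hsplit : ∀ x,
      ‖g x‖ₑ ^ q = (‖g x‖ₑ ^ a) ^ (θ * q / a) * (‖g x‖ₑ ^ b) ^ ((1 - θ) * q / b) := by
    intro x
    have ea : a * (θ * q / a) = θ * q := by field_simp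
    have eb : b * ((1 - θ) * q / b) = (1 - θ) * q := by field_simp
    rw [← rpow_mul, ← rpow_mul, ea, eb, ← rpow_add_of_nonneg _ _ (by positivity)
      (mul_nonneg (by linarith) hq₀.le)]
    ring_nf
  have hexp : θ * q / a + (1 - θ) * q / b = 1 := by
    rw [mul_div_right_comm, mul_div_right_comm (1 - θ), ← add_mul, ← hq]
    field_simp
  have key : ∫⁻ x, ‖g x‖ₑ ^ q ∂μ ≤
      (∫⁻ x, ‖g x‖ₑ ^ a ∂μ) ^ (θ * q / a) * (∫⁻ x, ‖g x‖ₑ ^ b ∂μ) ^ ((1 - θ) * q / b) := by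
    simp_rw [hsplit]
    exact lintegral_mul_norm_pow_le (hg.enorm.pow_const a) (hg.enorm.pow_const b)
      (by positivity) (div_nonneg (mul_nonneg (by linarith) hq₀.le) hb.le) hexp
  rw [eLpNorm_ofReal_eq_lintegral hq₀, eLpNorm_ofReal_eq_lintegral ha,
    eLpNorm_ofReal_eq_lintegral hb]
  calc (∫⁻ x, ‖g x‖ₑ ^ q ∂μ) ^ (1 / q)
      ≤ ((∫⁻ x, ‖g x‖ₑ ^ a ∂μ) ^ (θ * q / a) *
          (∫⁻ x, ‖g x‖ₑ ^ b ∂μ) ^ ((1 - θ) * q / b)) ^ (1 / q) := by gcongr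
    _ = _ := by
      rw [mul_rpow_of_nonneg _ _ (by positivity), ← rpow_mul, ← rpow_mul, ← rpow_mul,
        ← rpow_mul]
      congr 2 <;> field_simp

lemma eLpNorm_le_of_mem_Ioo {g : α → E} (hg : AEStronglyMeasurable g μ) {a b q : ℝ}
    (ha : 0 < a) (hq : q ∈ Set.Ioo a b) {B : ℝ≥0∞}
    (hga : eLpNorm g (ENNReal.ofReal a) μ ≤ B) (hgb : eLpNorm g (ENNReal.ofReal b) μ ≤ B) :
    eLpNorm g (ENNReal.ofReal q) μ ≤ B := by
  obtain ⟨θ, ⟨hθ₀, hθ₁⟩, hθ⟩ := exists_interpolation_exponent ha hq.1 hq.2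
  calc eLpNorm g (ENNReal.ofReal q) μ
      ≤ eLpNorm g (ENNReal.ofReal a) μ ^ θ * eLpNorm g (ENNReal.ofReal b) μ ^ (1 - θ) :=
        eLpNorm_le_eLpNorm_rpow_mul_eLpNorm_rpow hg ha (ha.trans (hq.1.trans hq.2)) hθ₀.le
          hθ₁.le hθ
    _ ≤ B ^ θ * B ^ (1 - θ) := by gcongr
    _ = B := by rw [← rpow_add_of_nonneg _ _ hθ₀.le (by linarith), add_sub_cancel, rpow_one]

lemma tendsto_eLpNorm_zero_of_interpolation {ι : Type*} {l : Filter ι} {w : ι → α → E}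
    (hw : ∀ k, AEStronglyMeasurable (w k) μ) {a b q θ : ℝ} (ha : 0 < a) (hb : 0 < b)
    (hθ₀ : 0 < θ) (hθ₁ : θ ≤ 1) (hq : 1 / q = θ / a + (1 - θ) / b) {B : ℝ≥0∞} (hB : B ≠ ∞)
    (hwb : ∀ k, eLpNorm (w k) (ENNReal.ofReal b) μ ≤ B)
    (hwa : Tendsto (fun k => eLpNorm (w k) (ENNReal.ofReal a) μ) l (𝓝 0)) :
    Tendsto (fun k => eLpNorm (w k) (ENNReal.ofReal q) μ) l (𝓝 0) := by
  have hlim : Tendsto (fun k => eLpNorm (w k) (ENNReal.ofReal a) μ ^ θ * B ^ (1 - θ)) l (𝓝 0) := by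
    have h := ENNReal.Tendsto.mul_const
      ((ENNReal.continuous_rpow_const (y := θ)).tendsto 0 |>.comp hwa)
      (Or.inr (rpow_ne_top_of_nonneg (sub_nonneg.2 hθ₁) hB))
    rwa [Function.comp_def, zero_rpow_of_pos hθ₀, zero_mul] at h
  refine tendsto_of_tendsto_of_tendsto_of_le_of_le tendsto_const_nhds hlim (fun k => zero_le)
    fun k => ?_
  calc eLpNorm (w k) (ENNReal.ofReal q) μ
      ≤ eLpNorm (w k) (ENNReal.ofReal a) μ ^ θ * eLpNorm (w k) (ENNReal.ofReal b) μ ^ (1 - θ) :=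
        eLpNorm_le_eLpNorm_rpow_mul_eLpNorm_rpow (hw k) ha hb hθ₀.le hθ₁ hq
    _ ≤ _ := by gcongr; exact hwb k

lemma tendsto_eLpNorm_zero_of_mem_Ioo {ι : Type*} {l : Filter ι} {w : ι → α → E}
    (hw : ∀ k, AEStronglyMeasurable (w k) μ) {a b p q : ℝ} (ha : 0 < a) {B : ℝ≥0∞} (hB : B ≠ ∞)
    (hwa : ∀ k, eLpNorm (w k) (ENNReal.ofReal a) μ ≤ B)
    (hwb : ∀ k, eLpNorm (w k) (ENNReal.ofReal b) μ ≤ B) (hp : p ∈ Set.Ioo a b)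
    (hwp : Tendsto (fun k => eLpNorm (w k) (ENNReal.ofReal p) μ) l (𝓝 0))
    (hq : q ∈ Set.Ioo a b) :
    Tendsto (fun k => eLpNorm (w k) (ENNReal.ofReal q) μ) l (𝓝 0) := by
  rcases lt_trichotomy q p with hqp | rfl | hpq
  · obtain ⟨θ, ⟨hθ₀, hθ₁⟩, hθ⟩ := exists_interpolation_exponent ha hq.1 hqp
    refine tendsto_eLpNorm_zero_of_interpolation hw (ha.trans hp.1) ha (θ := 1 - θ)
      (by linarith) (by linarith) ?_ hB hwa hwp
    rw [hθ]
    ring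
  · exact hwp
  · obtain ⟨θ, ⟨hθ₀, hθ₁⟩, hθ⟩ := exists_interpolation_exponent (ha.trans hp.1) hpq hq.2
    exact tendsto_eLpNorm_zero_of_interpolation hw (ha.trans hp.1) (ha.trans (hq.1.trans hq.2))
      hθ₀ hθ₁.le hθ hB hwb hwp

lemma eLpNorm_abs_add_abs_le {U V : α → ℝ} (hU : AEStronglyMeasurable U μ)
    (hV : AEStronglyMeasurable V μ) {p : ℝ≥0∞} (hp : 1 ≤ p) :
    eLpNorm (fun x => |U x| + |V x|) p μ ≤ eLpNorm U p μ + eLpNorm V p μ := by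
  refine (eLpNorm_add_le (f := fun x => |U x|) (g := fun x => |V x|) hU.norm hV.norm hp).trans_eq ?_
  simp only [← Real.norm_eq_abs, eLpNorm_norm]

lemma lintegral_enorm_integral_sub_integral_le {f : α → ℝ → ℝ} (hf : ∀ x, Continuous (f x))
    {ε C r q : ℝ} (hε : 0 ≤ ε) (hC : 0 ≤ C) (hr : 1 < r) (hq : 1 < q)
    (hbd : ∀ x s, |f x s| ≤ ε * (|s| + |s| ^ (r - 1)) + C * |s| ^ (q - 1))
    {U V : α → ℝ} (hU : AEStronglyMeasurable U μ) (hV : AEStronglyMeasurable V μ) :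
    ∫⁻ x, ‖(∫ t in (0 : ℝ)..U x, f x t) - ∫ t in (0 : ℝ)..V x, f x t‖ₑ ∂μ ≤
      ENNReal.ofReal ε * (eLpNorm (U - V) 2 μ * eLpNorm (fun x => |U x| + |V x|) 2 μ +
        eLpNorm (U - V) (ENNReal.ofReal r) μ *
          eLpNorm (fun x => |U x| + |V x|) (ENNReal.ofReal r) μ ^ (r - 1)) +
      ENNReal.ofReal C * (eLpNorm (U - V) (ENNReal.ofReal q) μ *
        eLpNorm (fun x => |U x| + |V x|) (ENNReal.ofReal q) μ ^ (q - 1)) := by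
  set M : α → ℝ := fun x => |U x| + |V x|
  set w : α → ℝ := U - V
  have hw : AEStronglyMeasurable w μ := hU.sub hV
  have hM : AEStronglyMeasurable M μ :=
    (continuous_abs.comp_aestronglyMeasurable hU).add (continuous_abs.comp_aestronglyMeasurable hV)
  have hterm : ∀ s : ℝ, AEMeasurable (fun x => ‖w x‖ₑ * ‖M x‖ₑ ^ s) μ :=
    fun s => hw.enorm.mul (hM.enorm.pow_const s)
  have hpt : ∀ x, ‖(∫ t in (0 : ℝ)..U x, f x t) - ∫ t in (0 : ℝ)..V x, f x t‖ₑ ≤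
      ENNReal.ofReal ε * (‖w x‖ₑ * ‖M x‖ₑ ^ ((2 : ℝ) - 1) + ‖w x‖ₑ * ‖M x‖ₑ ^ (r - 1)) +
        ENNReal.ofReal C * (‖w x‖ₑ * ‖M x‖ₑ ^ (q - 1)) := by
    intro x
    have hMx : 0 ≤ M x := by positivity
    rw [Real.enorm_eq_ofReal_abs]
    refine (ofReal_le_ofReal (abs_integral_sub_integral_le_of_growth (hf x) hε hC hr.le hq.le
      (hbd x) (U x) (V x))).trans_eq ?_
    rw [ofReal_mul (by positivity), ofReal_add (by positivity) (by positivity), ofReal_mul hε,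
      ofReal_mul hC, ofReal_add hMx (by positivity),
      ← ofReal_rpow_of_nonneg hMx (by linarith), ← ofReal_rpow_of_nonneg hMx (by linarith),
      Real.enorm_eq_ofReal_abs, Real.enorm_of_nonneg hMx]
    norm_num [w, M]
    ring
  calc ∫⁻ x, ‖(∫ t in (0 : ℝ)..U x, f x t) - ∫ t in (0 : ℝ)..V x, f x t‖ₑ ∂μ
      ≤ ∫⁻ x, ENNReal.ofReal ε * (‖w x‖ₑ * ‖M x‖ₑ ^ ((2 : ℝ) - 1) + ‖w x‖ₑ * ‖M x‖ₑ ^ (r - 1)) +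
          ENNReal.ofReal C * (‖w x‖ₑ * ‖M x‖ₑ ^ (q - 1)) ∂μ := lintegral_mono hpt
    _ = ENNReal.ofReal ε * (∫⁻ x, ‖w x‖ₑ * ‖M x‖ₑ ^ ((2 : ℝ) - 1) ∂μ +
          ∫⁻ x, ‖w x‖ₑ * ‖M x‖ₑ ^ (r - 1) ∂μ) +
        ENNReal.ofReal C * ∫⁻ x, ‖w x‖ₑ * ‖M x‖ₑ ^ (q - 1) ∂μ := by
      rw [lintegral_add_left' (((hterm _).fun_add (hterm _)).const_mul _),
        lintegral_const_mul' _ _ ofReal_ne_top, lintegral_const_mul' _ _ ofReal_ne_top,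
        lintegral_add_left' (hterm _)]
    _ ≤ ENNReal.ofReal ε * (eLpNorm w (ENNReal.ofReal 2) μ *
            eLpNorm M (ENNReal.ofReal 2) μ ^ ((2 : ℝ) - 1) +
          eLpNorm w (ENNReal.ofReal r) μ * eLpNorm M (ENNReal.ofReal r) μ ^ (r - 1)) +
        ENNReal.ofReal C * (eLpNorm w (ENNReal.ofReal q) μ *
          eLpNorm M (ENNReal.ofReal q) μ ^ (q - 1)) := by
      gcongr
      exacts [lintegral_enorm_mul_rpow_le hw hM one_lt_two, lintegral_enorm_mul_rpow_le hw hM hr,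
        lintegral_enorm_mul_rpow_le hw hM hq]
    _ = _ := by norm_num

lemma lintegral_enorm_integral_sub_integral_le_of_eLpNorm_le {f : α → ℝ → ℝ}
    (hf : ∀ x, Continuous (f x)) {ε C r q : ℝ} (hε : 0 ≤ ε) (hC : 0 ≤ C)
    (hq : q ∈ Set.Ioo 2 r)
    (hbd : ∀ x s, |f x s| ≤ ε * (|s| + |s| ^ (r - 1)) + C * |s| ^ (q - 1))
    {U V : α → ℝ} (hU : AEStronglyMeasurable U μ) (hV : AEStronglyMeasurable V μ) {B : ℝ≥0∞}
    (hU₂ : eLpNorm U 2 μ ≤ B) (hUr : eLpNorm U (ENNReal.ofReal r) μ ≤ B)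
    (hV₂ : eLpNorm V 2 μ ≤ B) (hVr : eLpNorm V (ENNReal.ofReal r) μ ≤ B) :
    ∫⁻ x, ‖(∫ t in (0 : ℝ)..U x, f x t) - ∫ t in (0 : ℝ)..V x, f x t‖ₑ ∂μ ≤
      ENNReal.ofReal ε * ((B + B) * (B + B) + (B + B) * (B + B) ^ (r - 1)) +
      ENNReal.ofReal C * (eLpNorm (U - V) (ENNReal.ofReal q) μ * (B + B) ^ (q - 1)) := by
  have hr : 2 < r := hq.1.trans hq.2
  have hr₁ : 1 ≤ ENNReal.ofReal r := by rw [ENNReal.one_le_ofReal]; linarith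
  have hw₂ := (eLpNorm_sub_le hU hV one_le_two).trans (add_le_add hU₂ hV₂)
  have hwr := (eLpNorm_sub_le hU hV hr₁).trans (add_le_add hUr hVr)
  have hM₂ := (eLpNorm_abs_add_abs_le hU hV one_le_two).trans (add_le_add hU₂ hV₂)
  have hMr := (eLpNorm_abs_add_abs_le hU hV hr₁).trans (add_le_add hUr hVr)
  have hMq : eLpNorm (fun x => |U x| + |V x|) (ENNReal.ofReal q) μ ≤ B + B :=
    eLpNorm_le_of_mem_Ioo (hU.norm.add hV.norm) two_pos hq (by rwa [ofReal_ofNat]) hMr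
  refine (lintegral_enorm_integral_sub_integral_le hf hε hC (by linarith)
    (by linarith [hq.1]) hbd hU hV).trans ?_
  gcongr <;> first | assumption | linarith [hq.1]

end

theorem stmt_10_general (N : ℕ) (pstar : ℝ)
    (f : EuclideanSpace ℝ (Fin N) → ℝ → ℝ)
    (hfc : Continuous fun q : EuclideanSpace ℝ (Fin N) × ℝ => f q.1 q.2)
    (hf : ∀ ε > (0 : ℝ), ∃ Cε > (0 : ℝ), ∃ pε ∈ Set.Ioo (2 : ℝ) pstar,
      ∀ (x : EuclideanSpace ℝ (Fin N)) (s : ℝ),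
        |f x s| ≤ ε * (|s| + |s| ^ (pstar - 1)) + Cε * |s| ^ (pε - 1))
    (F : EuclideanSpace ℝ (Fin N) → ℝ → ℝ)
    (hF : ∀ (x : EuclideanSpace ℝ (Fin N)) (s : ℝ), F x s = ∫ t in (0 : ℝ)..s, f x t)
    (u v : ℕ → EuclideanSpace ℝ (Fin N) → ℝ)
    (hum : ∀ k, AEStronglyMeasurable (u k) volume)
    (hvm : ∀ k, AEStronglyMeasurable (v k) volume)
    (C : ℝ≥0∞) (hC : C < ⊤)
    (hub : ∀ k, eLpNorm (u k) 2 volume ≤ C ∧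
      eLpNorm (u k) (ENNReal.ofReal pstar) volume ≤ C)
    (hvb : ∀ k, eLpNorm (v k) 2 volume ≤ C ∧
      eLpNorm (v k) (ENNReal.ofReal pstar) volume ≤ C)
    (p : ℝ) (hpmem : p ∈ Set.Ioo (2 : ℝ) pstar)
    (hconv : Tendsto (fun k => eLpNorm (u k - v k) (ENNReal.ofReal p) volume)
      atTop (nhds 0)) :
    Tendsto (fun k => ∫ x, F x (u k x) - F x (v k x)) atTop (nhds 0) := by
  have hpstar : 2 < pstar := hpmem.1.trans hpmem.2
  have hpstar₁ : 1 ≤ ENNReal.ofReal pstar := by rw [ENNReal.one_le_ofReal]; linarith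
  have hB : C + C ≠ ∞ := add_ne_top.2 ⟨hC.ne, hC.ne⟩
  refine tendsto_zero_iff_enorm_tendsto_zero.2 <| tendsto_of_tendsto_of_tendsto_of_le_of_le
    tendsto_const_nhds ?_ (fun k => zero_le) fun k => enorm_integral_le_lintegral_enorm _
  refine tendsto_zero_of_forall_le_ofReal_mul_add
    (A := (C + C) * (C + C) + (C + C) * (C + C) ^ (pstar - 1))
    (add_ne_top.2 ⟨mul_ne_top hB hB, mul_ne_top hB (rpow_ne_top_of_nonneg (by linarith) hB)⟩)
    fun ε hε => ?_
  obtain ⟨Cε, hCε, pε, hpε, hbd⟩ := hf ε hε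
  have hwε : Tendsto (fun k => eLpNorm (u k - v k) (ENNReal.ofReal pε) volume) atTop (𝓝 0) :=
    tendsto_eLpNorm_zero_of_mem_Ioo (fun k => (hum k).sub (hvm k)) two_pos hB
      (fun k => by rw [ofReal_ofNat]; exact
        (eLpNorm_sub_le (hum k) (hvm k) one_le_two).trans (add_le_add (hub k).1 (hvb k).1))
      (fun k => (eLpNorm_sub_le (hum k) (hvm k) hpstar₁).trans (add_le_add (hub k).2 (hvb k).2))
      hpmem hconv hpε
  refine ⟨fun k => ENNReal.ofReal Cε * (eLpNorm (u k - v k) (ENNReal.ofReal pε) volume *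
    (C + C) ^ (pε - 1)), ?_, fun k => ?_⟩
  · simpa using ENNReal.Tendsto.const_mul (ENNReal.Tendsto.mul_const hwε
      (Or.inr (rpow_ne_top_of_nonneg (by linarith [hpε.1]) hB))) (Or.inr ofReal_ne_top)
  · simp_rw [hF]
    exact lintegral_enorm_integral_sub_integral_le_of_eLpNorm_le
      (fun x => hfc.comp (.prodMk_right x)) hε.le hCε.le hpε hbd (hum k) (hvm k)
      (hub k).1 (hub k).2 (hvb k).1 (hvb k).2

theorem stmt_10 (N : ℕ) (hN : 3 ≤ N) (pstar : ℝ)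
    (hps : pstar = 2 * (N : ℝ) / ((N : ℝ) - 2))
    (f : EuclideanSpace ℝ (Fin N) → ℝ → ℝ)
    (hfc : Continuous fun q : EuclideanSpace ℝ (Fin N) × ℝ => f q.1 q.2)
    (hf : ∀ ε > (0 : ℝ), ∃ Cε > (0 : ℝ), ∃ pε ∈ Set.Ioo (2 : ℝ) pstar,
      ∀ (x : EuclideanSpace ℝ (Fin N)) (s : ℝ),
        |f x s| ≤ ε * (|s| + |s| ^ (pstar - 1)) + Cε * |s| ^ (pε - 1))
    (F : EuclideanSpace ℝ (Fin N) → ℝ → ℝ)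
    (hF : ∀ (x : EuclideanSpace ℝ (Fin N)) (s : ℝ), F x s = ∫ t in (0 : ℝ)..s, f x t)
    (u v : ℕ → EuclideanSpace ℝ (Fin N) → ℝ)
    (hum : ∀ k, AEStronglyMeasurable (u k) volume)
    (hvm : ∀ k, AEStronglyMeasurable (v k) volume)
    (C : ℝ≥0∞) (hC : C < ⊤)
    (hub : ∀ k, eLpNorm (u k) 2 volume ≤ C ∧
      eLpNorm (u k) (ENNReal.ofReal pstar) volume ≤ C)
    (hvb : ∀ k, eLpNorm (v k) 2 volume ≤ C ∧
      eLpNorm (v k) (ENNReal.ofReal pstar) volume ≤ C)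
    (p : ℝ) (hpmem : p ∈ Set.Ioo (2 : ℝ) pstar)
    (hconv : Tendsto (fun k => eLpNorm (u k - v k) (ENNReal.ofReal p) volume)
      atTop (nhds 0)) :
    Tendsto (fun k => ∫ x, F x (u k x) - F x (v k x)) atTop (nhds 0) :=
  stmt_10_general N pstar f hfc hf F hF u v hum hvm C hC hub hvb p hpmem hconv
end

section
/- Let N ≥ 3, 2* = 2N/(N−2), ω > 0, A, B, E > 0 with B < A, and γ = exp(4π/(ω(N−2))). Define g(s) = (A + B sin(ω ln|s|) + E)|s|^{2*−2} s for s ≠ 0 and g(0) = 0, and G(s) = ∫₀^s g. Then G is self-similar with parameter γ: G(s) = γ^{−Nj} G(γ^{((N−2)/2) j} s) for all j ∈ ℤ and s ∈ ℝ, and moreover g(s)s > 0 for s ≠ 0 and G(s) ≥ ((A−B+E)/2*) |s|^{2*} for all s. -/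
/-!
Write `g s = θ s * |s| ^ (2* - 2) * s` with `θ s = A + B sin (ω log |s|) + E`. For
`c = γ ^ ((N - 2) j / 2)` one has `ω log c = 2πj`, so `θ (c s) = θ s` and `g` is homogeneous
of degree `2* - 1` under multiplication by `c`; the substitution `t = c u` then gives
`G (c s) = c ^ 2* G s = γ ^ (N j) G s`. Since `θ` is even, `g` is odd and `G` is even, and
`θ ≥ A - B + E` bounds `G s` below by the integral of `(A - B + E) t ^ (2* - 1)`.
-/

open Real MeasureTheory intervalIntegral

section Primitive

variable {g : ℝ → ℝ}

theorem integral_zero_mul_of_homogeneous {p c : ℝ} (hc : 0 < c)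
    (hg : ∀ x, g (c * x) = c ^ (p - 1) * g x) (s : ℝ) :
    ∫ t in (0 : ℝ)..c * s, g t = c ^ p * ∫ t in (0 : ℝ)..s, g t := by
  have h := smul_integral_comp_mul_left g c (a := 0) (b := s)
  simp only [mul_zero, smul_eq_mul, hg, intervalIntegral.integral_const_mul] at h
  rw [← h, rpow_sub_one hc.ne']
  field_simp

theorem integral_zero_neg_of_odd (hg : ∀ x, g (-x) = -g x) (s : ℝ) :
    ∫ t in (0 : ℝ)..-s, g t = ∫ t in (0 : ℝ)..s, g t := by
  have h := integral_comp_neg (a := 0) (b := s) g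
  simp only [hg, intervalIntegral.integral_neg, neg_zero] at h
  rw [integral_symm, ← h, neg_neg]

end Primitive

noncomputable def modulatedPow (θ : ℝ → ℝ) (p s : ℝ) : ℝ := θ s * |s| ^ (p - 2) * s

section ModulatedPow

variable {θ : ℝ → ℝ} {p : ℝ}

@[simp]
theorem modulatedPow_zero : modulatedPow θ p 0 = 0 := by simp [modulatedPow]

theorem modulatedPow_neg (hθ : ∀ s, θ (-s) = θ s) (s : ℝ) :
    modulatedPow θ p (-s) = -modulatedPow θ p s := by
  simp only [modulatedPow, hθ, abs_neg]; ring

theorem modulatedPow_mul_of_pos {c : ℝ} (hc : 0 < c) (hθ : ∀ x, θ (c * x) = θ x) (x : ℝ) :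
    modulatedPow θ p (c * x) = c ^ (p - 1) * modulatedPow θ p x := by
  simp only [modulatedPow, hθ, abs_mul, abs_of_pos hc, mul_rpow hc.le (abs_nonneg x),
    show p - 1 = p - 2 + 1 by ring, rpow_add_one hc.ne']
  ring

theorem modulatedPow_of_nonneg (hp : 1 < p) {s : ℝ} (hs : 0 ≤ s) :
    modulatedPow θ p s = θ s * s ^ (p - 1) := by
  rcases hs.eq_or_lt with rfl | hs
  · simp [zero_rpow (by linarith : p - 1 ≠ 0)]
  · rw [modulatedPow, abs_of_pos hs, mul_assoc, ← rpow_add_one hs.ne']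
    ring_nf

theorem modulatedPow_mul_self_pos {s : ℝ} (hθ : 0 < θ s) (hs : s ≠ 0) :
    0 < modulatedPow θ p s * s := by
  rw [modulatedPow, mul_assoc _ s]
  exact mul_pos (mul_pos hθ (rpow_pos_of_pos (abs_pos.2 hs) _)) (mul_self_pos.2 hs)

theorem intervalIntegrable_modulatedPow (hp : 2 ≤ p) (hθ : Measurable θ) {M : ℝ}
    (hM : ∀ s, |θ s| ≤ M) (a b : ℝ) : IntervalIntegrable (modulatedPow θ p) volume a b := by
  have hφ : Continuous fun s : ℝ => |s| ^ (p - 2) * s :=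
    (continuous_abs.rpow_const fun _ => Or.inr (by linarith)).mul continuous_id
  rw [show modulatedPow θ p = fun s => θ s * (|s| ^ (p - 2) * s) from
    funext fun s => mul_assoc _ _ _]
  exact intervalIntegrable_iff.2 <| (intervalIntegrable_iff.1 (hφ.intervalIntegrable a b)).bdd_mul
    hθ.aestronglyMeasurable (ae_of_all _ hM)

theorem le_integral_modulatedPow (hp : 1 < p) {m : ℝ} (hθ : ∀ s, m ≤ θ s) {s : ℝ} (hs : 0 ≤ s)
    (hint : IntervalIntegrable (modulatedPow θ p) volume 0 s) :
    m / p * s ^ p ≤ ∫ t in (0 : ℝ)..s, modulatedPow θ p t := by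
  have hpow : ∫ t in (0 : ℝ)..s, m * t ^ (p - 1) = m / p * s ^ p := by
    rw [intervalIntegral.integral_const_mul, integral_rpow (Or.inl (by linarith)), sub_add_cancel,
      zero_rpow (by linarith)]
    ring
  rw [← hpow]
  refine integral_mono_on hs ((intervalIntegrable_rpow' (by linarith)).const_mul m) hint
    fun t ht => ?_
  rw [modulatedPow_of_nonneg hp ht.1]
  exact mul_le_mul_of_nonneg_right (hθ t) (rpow_nonneg ht.1 _)

theorem le_integral_modulatedPow_abs (hp : 2 ≤ p) (hθ_meas : Measurable θ) {M : ℝ}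
    (hM : ∀ s, |θ s| ≤ M) (hθ_even : ∀ s, θ (-s) = θ s) {m : ℝ} (hθ : ∀ s, m ≤ θ s) (s : ℝ) :
    m / p * |s| ^ p ≤ ∫ t in (0 : ℝ)..s, modulatedPow θ p t := by
  have hint := intervalIntegrable_modulatedPow hp hθ_meas hM 0
  rcases le_total 0 s with hs | hs
  · rw [abs_of_nonneg hs]
    exact le_integral_modulatedPow (by linarith) hθ hs (hint s)
  · rw [abs_of_nonpos hs, ← integral_zero_neg_of_odd (modulatedPow_neg hθ_even) s]
    exact le_integral_modulatedPow (by linarith) hθ (by linarith) (hint (-s))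

end ModulatedPow

theorem sin_mul_log_abs_mul {ω c : ℝ} (hc : 0 < c) {j : ℤ} (h : ω * log c = j * (2 * π))
    (x : ℝ) : sin (ω * log |c * x|) = sin (ω * log |x|) := by
  rcases eq_or_ne x 0 with rfl | hx
  · simp
  rw [abs_mul, abs_of_pos hc, log_mul hc.ne' (abs_ne_zero.2 hx), mul_add, h, add_comm,
    sin_add_int_mul_two_pi]

theorem stmt_15_general (N : ℕ) (hN : 3 ≤ N) (pstar : ℝ)
    (hps : pstar = 2 * (N : ℝ) / ((N : ℝ) - 2))
    (ω A B E : ℝ) (hω : 0 < ω) (hB : 0 < B) (hE : 0 < E) (hBA : B < A)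
    (γ : ℝ) (hγ : γ = Real.exp (4 * Real.pi / (ω * ((N : ℝ) - 2))))
    (g G : ℝ → ℝ)
    (hg : ∀ s : ℝ, s ≠ 0 →
      g s = (A + B * Real.sin (ω * Real.log |s|) + E) * |s| ^ (pstar - 2) * s)
    (hg0 : g 0 = 0)
    (hG : ∀ s : ℝ, G s = ∫ t in (0 : ℝ)..s, g t) :
    (∀ (j : ℤ) (s : ℝ),
      G s = γ ^ (-(N : ℝ) * (j : ℝ)) * G (γ ^ (((N : ℝ) - 2) / 2 * (j : ℝ)) * s)) ∧
    (∀ s : ℝ, s ≠ 0 → 0 < g s * s) ∧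
    (∀ s : ℝ, (A - B + E) / pstar * |s| ^ pstar ≤ G s) := by
  have hN' : (3 : ℝ) ≤ N := by exact_mod_cast hN
  have hN2 : (N : ℝ) - 2 ≠ 0 := by linarith
  have hp : 2 < pstar := by rw [hps, lt_div_iff₀ (by linarith)]; linarith
  set θ : ℝ → ℝ := fun s => A + B * sin (ω * log |s|) + E with hθ
  have hθ_lower (s : ℝ) : A - B + E ≤ θ s := by nlinarith [neg_one_le_sin (ω * log |s|)]
  have hθ_abs (s : ℝ) : |θ s| ≤ A + B + E :=
    abs_le.2 ⟨by nlinarith [neg_one_le_sin (ω * log |s|)], by nlinarith [sin_le_one (ω * log |s|)]⟩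
  have hg_eq : g = modulatedPow θ pstar := funext fun s => by
    rcases eq_or_ne s 0 with rfl | hs
    · rw [hg0, modulatedPow_zero]
    · exact hg s hs
  subst hg_eq
  refine ⟨fun j s => ?_, fun s hs => modulatedPow_mul_self_pos (by linarith [hθ_lower s]) hs,
    fun s => ?_⟩
  · have hγ0 : 0 < γ := hγ ▸ exp_pos _
    set c := γ ^ (((N : ℝ) - 2) / 2 * j)
    have hc : 0 < c := rpow_pos_of_pos hγ0 _
    have hlog : ω * log c = j * (2 * π) := by
      rw [log_rpow hγ0, hγ, log_exp]; field_simp; ring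
    have hcp : c ^ pstar = γ ^ ((N : ℝ) * j) := by
      rw [← rpow_mul hγ0.le, hps]; congr 1; field_simp
    rw [hG, hG, integral_zero_mul_of_homogeneous hc
      (modulatedPow_mul_of_pos hc fun x => by simp only [hθ, sin_mul_log_abs_mul hc hlog]),
      hcp, ← mul_assoc, ← rpow_add hγ0]
    simp
  · rw [hG]
    exact le_integral_modulatedPow_abs hp.le (by fun_prop) hθ_abs (fun x => by simp [hθ])
      hθ_lower s

theorem stmt_15 (N : ℕ) (hN : 3 ≤ N) (pstar : ℝ)
    (hps : pstar = 2 * (N : ℝ) / ((N : ℝ) - 2))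
    (ω A B E : ℝ) (hω : 0 < ω) (hA : 0 < A) (hB : 0 < B) (hE : 0 < E) (hBA : B < A)
    (γ : ℝ) (hγ : γ = Real.exp (4 * Real.pi / (ω * ((N : ℝ) - 2))))
    (g G : ℝ → ℝ)
    (hg : ∀ s : ℝ, s ≠ 0 →
      g s = (A + B * Real.sin (ω * Real.log |s|) + E) * |s| ^ (pstar - 2) * s)
    (hg0 : g 0 = 0)
    (hG : ∀ s : ℝ, G s = ∫ t in (0 : ℝ)..s, g t) :
    (∀ (j : ℤ) (s : ℝ),
      G s = γ ^ (-(N : ℝ) * (j : ℝ)) * G (γ ^ (((N : ℝ) - 2) / 2 * (j : ℝ)) * s)) ∧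
    (∀ s : ℝ, s ≠ 0 → 0 < g s * s) ∧
    (∀ s : ℝ, (A - B + E) / pstar * |s| ^ pstar ≤ G s) :=
  stmt_15_general N hN pstar hps ω A B E hω hB hE hBA γ hγ g G hg hg0 hG
end
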